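/- arXiv:1908.07009 — 3 statements merged into one kernel-verified Lean document; each statement's English description precedes it below -/
import Mathlib

section
/- Let 0 < η < 1/2 and losses ℓ_f^t ∈ [0,1] for experts f in a finite set F of size d over T rounds, with weights w_f^1 = 1 and w_f^{t+1} = w_f^t (1−η)^{ℓ_f^t}. The total weight satisfies Σ_f w_f^{T+1} ≥ (1−η)^{L_{f*}} where f* is any expert, and Σ_f w_f^{T+1} ≤ d · Π_{t=1}^T (1 − η m^t), where m^t = Σ_f (w_f^t/Σ_g w_g^t) ℓ_f^t is the algorithm's expected loss at round t. -/
lemma chord_rpow {a x : ℝ} (ha : 0 < a) (hx0 : 0 ≤ x) (hx1 : x ≤ 1) :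
    a ^ x ≤ 1 + x * (a - 1) := by
  have h := convexOn_exp.2 (Set.mem_univ (0 : ℝ)) (Set.mem_univ (Real.log a))
    (by linarith : (0:ℝ) ≤ 1 - x) hx0 (by ring)
  rw [Real.rpow_def_of_pos ha]
  simp only [smul_eq_mul, mul_zero, zero_add, Real.exp_zero, Real.exp_log ha] at h
  calc Real.exp (Real.log a * x) = Real.exp (x * Real.log a) := by ring_nf
    _ ≤ (1 - x) * 1 + x * a := h
    _ = 1 + x * (a - 1) := by ring

theorem mw_potential_bounds {F : Type*} [Fintype F] [Nonempty F]
    (η : ℝ) (hη0 : 0 < η) (hη : η < 1/2) (T : ℕ)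
    (ℓ : ℕ → F → ℝ) (hℓ0 : ∀ t f, 0 ≤ ℓ t f) (hℓ1 : ∀ t f, ℓ t f ≤ 1)
    (w : ℕ → F → ℝ) (hw0 : ∀ f, w 0 f = 1)
    (hwrec : ∀ t f, w (t + 1) f = w t f * (1 - η) ^ (ℓ t f)) :
    (∀ fstar : F, (1 - η) ^ (∑ t ∈ Finset.range T, ℓ t fstar) ≤ ∑ f : F, w T f) ∧
      (∑ f : F, w T f ≤ (Fintype.card F : ℝ) *
        ∏ t ∈ Finset.range T,
          (1 - η * ∑ f : F, (w t f / ∑ g : F, w t g) * ℓ t f)) := by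
  have hη1 : (0:ℝ) < 1 - η := by linarith
  have hwpos : ∀ t f, 0 < w t f := by
    intro t
    induction t with
    | zero => intro f; rw [hw0]; norm_num
    | succ n ih =>
      intro f; rw [hwrec]
      exact mul_pos (ih f) (Real.rpow_pos_of_pos hη1 _)
  have hWpos : ∀ t, 0 < ∑ f : F, w t f :=
    fun t => Finset.sum_pos (fun f _ => hwpos t f) Finset.univ_nonempty
  constructor
  · intro fstar
    have hval : ∀ t, w t fstar = (1 - η) ^ (∑ s ∈ Finset.range t, ℓ s fstar) := by
      intro t
      induction t with
      | zero => simp [hw0]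
      | succ n ih =>
        rw [hwrec, ih, Finset.sum_range_succ, Real.rpow_add hη1]
    calc (1 - η) ^ (∑ t ∈ Finset.range T, ℓ t fstar) = w T fstar := (hval T).symm
      _ ≤ ∑ f : F, w T f :=
        Finset.single_le_sum (fun f _ => (hwpos T f).le) (Finset.mem_univ fstar)
  · induction T with
    | zero => simp [hw0]
    | succ n ih =>
      have hWn := hWpos n
      have hm1 : ∑ f : F, (w n f / ∑ g : F, w n g) * ℓ n f ≤ 1 := by
        calc ∑ f : F, (w n f / ∑ g : F, w n g) * ℓ n f
            ≤ ∑ f : F, (w n f / ∑ g : F, w n g) * 1 := by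
              apply Finset.sum_le_sum
              intro f _
              exact mul_le_mul_of_nonneg_left (hℓ1 n f)
                (div_nonneg (hwpos n f).le hWn.le)
          _ = 1 := by
              simp only [mul_one]
              rw [← Finset.sum_div, div_self hWn.ne']
      have hfac : 0 ≤ 1 - η * ∑ f : F, (w n f / ∑ g : F, w n g) * ℓ n f := by
        nlinarith
      have hstep : ∑ f : F, w (n + 1) f ≤
          (∑ f : F, w n f) * (1 - η * ∑ f : F, (w n f / ∑ g : F, w n g) * ℓ n f) := by
        have h1 : ∑ f : F, w (n + 1) f ≤ ∑ f : F, w n f * (1 - η * ℓ n f) := by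
          apply Finset.sum_le_sum
          intro f _
          rw [hwrec]
          have := chord_rpow hη1 (hℓ0 n f) (hℓ1 n f)
          have h2 : (1 - η) ^ ℓ n f ≤ 1 - η * ℓ n f := by
            calc (1 - η) ^ ℓ n f ≤ 1 + ℓ n f * (1 - η - 1) := this
              _ = 1 - η * ℓ n f := by ring
          exact mul_le_mul_of_nonneg_left h2 (hwpos n f).le
        have h3 : ∑ f : F, w n f * (1 - η * ℓ n f) =
            (∑ f : F, w n f) * (1 - η * ∑ f : F, (w n f / ∑ g : F, w n g) * ℓ n f) := by
          have key : (∑ g : F, w n g) * (η * ∑ f : F, (w n f / ∑ g : F, w n g) * ℓ n f)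
              = η * ∑ f : F, w n f * ℓ n f := by
            rw [mul_left_comm, Finset.mul_sum]
            congr 1
            apply Finset.sum_congr rfl
            intro f _
            field_simp
          rw [mul_sub, mul_one, key]
          simp only [mul_sub, Finset.sum_sub_distrib]
          congr 1
          · simp
          · rw [Finset.mul_sum]
            apply Finset.sum_congr rfl
            intro f _
            ring
        rw [← h3]; exact h1
      calc ∑ f : F, w (n + 1) f
          ≤ (∑ f : F, w n f) * (1 - η * ∑ f : F, (w n f / ∑ g : F, w n g) * ℓ n f) :=
            hstep
        _ ≤ ((Fintype.card F : ℝ) * ∏ t ∈ Finset.range n,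
              (1 - η * ∑ f : F, (w t f / ∑ g : F, w t g) * ℓ t f)) *
              (1 - η * ∑ f : F, (w n f / ∑ g : F, w n g) * ℓ n f) :=
            mul_le_mul_of_nonneg_right ih hfac
        _ = (Fintype.card F : ℝ) * ∏ t ∈ Finset.range (n + 1),
              (1 - η * ∑ f : F, (w t f / ∑ g : F, w t g) * ℓ t f) := by
            rw [Finset.prod_range_succ, mul_assoc]
end

section
/- Suppose for each group z ∈ {A,B} the expected false positive loss satisfies γ(η)·L* + c_z ≤ E[L_{z,−}] ≤ (1+η)·L_z* + K + c_z with L_A*/C_A and L_B*/C_B differing by at most ε (where C_z > 0 are normalizers and L_z* are best-expert losses). Then |E[L_{A,−}]/C_A − E[L_{B,−}]/C_B| ≤ (1+η−γ(η))·max(L_A*/C_A, L_B*/C_B) + ε·max(1+η, γ(η)) + K/min(C_A,C_B) + |c_A/C_A − c_B/C_B|. -/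
theorem fairness_bound_abstract
    (η ε K : ℝ) (hη0 : 0 < η) (hη : η < 1/2) (hK : 0 ≤ K) (hε : 0 ≤ ε)
    (CA CB cA cB LA LB EA EB : ℝ) (hCA : 0 < CA) (hCB : 0 < CB)
    (hLA : 0 ≤ LA) (hLB : 0 ≤ LB)
    (hlowA : Real.log (1 - η) / Real.log (1 - η * (1 + η)) * LA + cA ≤ EA)
    (hupA : EA ≤ (1 + η) * LA + K + cA)
    (hlowB : Real.log (1 - η) / Real.log (1 - η * (1 + η)) * LB + cB ≤ EB)
    (hupB : EB ≤ (1 + η) * LB + K + cB)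
    (hfair : |LA / CA - LB / CB| ≤ ε) :
    |EA / CA - EB / CB| ≤
      (1 + η - Real.log (1 - η) / Real.log (1 - η * (1 + η))) * max (LA / CA) (LB / CB)
      + ε * max (1 + η) (Real.log (1 - η) / Real.log (1 - η * (1 + η)))
      + K / min CA CB + |cA / CA - cB / CB| := by
  set γ := Real.log (1 - η) / Real.log (1 - η * (1 + η)) with hγdef
  have hx : Real.log (1 - η) < 0 := Real.log_neg (by linarith) (by linarith)
  have h1 : (0:ℝ) < 1 - η * (1 + η) := by nlinarith
  have hy : Real.log (1 - η * (1 + η)) < 0 := Real.log_neg h1 (by nlinarith)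
  have hyx : Real.log (1 - η * (1 + η)) ≤ Real.log (1 - η) :=
    Real.log_le_log (by linarith) (by nlinarith)
  have hγ0 : 0 ≤ γ := by
    have h := div_nonneg (neg_nonneg.mpr hx.le) (neg_nonneg.mpr hy.le)
    rwa [neg_div_neg_eq] at h
  have hγ1 : γ ≤ 1 := by
    rw [hγdef, div_le_one_of_neg hy]
    exact hyx
  have hmax2 : max (1 + η) γ = 1 + η := max_eq_left (by linarith)
  set a := LA / CA with ha
  set b := LB / CB with hb
  have hab : a - b ≤ ε := (abs_sub_le_iff.mp hfair).1
  have hba : b - a ≤ ε := (abs_sub_le_iff.mp hfair).2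
  have ha0 : 0 ≤ a := div_nonneg hLA hCA.le
  have hb0 : 0 ≤ b := div_nonneg hLB hCB.le
  have hmaxa : a ≤ max a b := le_max_left a b
  have hmaxb : b ≤ max a b := le_max_right a b
  have hminA : min CA CB ≤ CA := min_le_left _ _
  have hminB : min CA CB ≤ CB := min_le_right _ _
  have hmin0 : 0 < min CA CB := lt_min hCA hCB
  have hKA : K / CA ≤ K / min CA CB := div_le_div_of_nonneg_left hK hmin0 hminA
  have hKB : K / CB ≤ K / min CA CB := div_le_div_of_nonneg_left hK hmin0 hminB
  have hc1 : cA / CA - cB / CB ≤ |cA / CA - cB / CB| := le_abs_self _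
  have hc2 : -(cA / CA - cB / CB) ≤ |cA / CA - cB / CB| := neg_le_abs _
  have hEAup : EA / CA ≤ (1 + η) * a + K / CA + cA / CA := by
    have h : EA / CA ≤ ((1 + η) * LA + K + cA) / CA := by gcongr
    have : ((1 + η) * LA + K + cA) / CA = (1 + η) * a + K / CA + cA / CA := by
      rw [ha]; field_simp
    linarith [this ▸ h]
  have hEAlow : γ * a + cA / CA ≤ EA / CA := by
    have h : (γ * LA + cA) / CA ≤ EA / CA := by gcongr
    have : (γ * LA + cA) / CA = γ * a + cA / CA := by
      rw [ha]; field_simp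
    linarith [this ▸ h]
  have hEBup : EB / CB ≤ (1 + η) * b + K / CB + cB / CB := by
    have h : EB / CB ≤ ((1 + η) * LB + K + cB) / CB := by gcongr
    have : ((1 + η) * LB + K + cB) / CB = (1 + η) * b + K / CB + cB / CB := by
      rw [hb]; field_simp
    linarith [this ▸ h]
  have hEBlow : γ * b + cB / CB ≤ EB / CB := by
    have h : (γ * LB + cB) / CB ≤ EB / CB := by gcongr
    have : (γ * LB + cB) / CB = γ * b + cB / CB := by
      rw [hb]; field_simp
    linarith [this ▸ h]
  rw [hmax2, abs_sub_le_iff]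
  constructor
  · linarith [mul_le_mul_of_nonneg_left hab (by linarith : (0:ℝ) ≤ 1 + η),
      mul_le_mul_of_nonneg_left hmaxb (by linarith : (0:ℝ) ≤ 1 + η - γ)]
  · linarith [mul_le_mul_of_nonneg_left hba (by linarith : (0:ℝ) ≤ 1 + η),
      mul_le_mul_of_nonneg_left hmaxa (by linarith : (0:ℝ) ≤ 1 + η - γ)]
end

section
/- For 0 < η < 1/2, the function η ↦ (1+η) − γ(η) with γ(η) = ln(1−η)/ln(1−η−η²) is strictly increasing in η on (0, 1/2). -/
/-!
Write `γ(η) = log a / log b` with `a = 1 - η` and `b = 1 - η - η²`. Since `1 + η` is strictly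
increasing, it suffices that `γ' < 0`. Up to the positive factor `a b (log b)²`, `γ'` is
`(1 + 2η) a log a - b log b`. The bounds `log a ≤ -η` and `2 b log b ≥ b² - 1` (which is
`sinh t ≤ t` at `t = log b ≤ 0`) make this at most `-(η a)² / 2 < 0`.
-/

open Real Set

lemma sub_inv_le_two_mul_log {x : ℝ} (hx0 : 0 < x) (hx1 : x ≤ 1) :
    x - x⁻¹ ≤ 2 * log x := by
  have h := sinh_le_self_iff.2 (log_nonpos hx0.le hx1)
  rw [sinh_log hx0] at h
  linarith

lemma one_add_two_mul_mul_log_lt {η : ℝ} (hη : 0 < η) (hb : 0 < 1 - η - η ^ 2) :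
    (1 + 2 * η) * (1 - η) * log (1 - η) < (1 - η - η ^ 2) * log (1 - η - η ^ 2) := by
  have ha : 0 < 1 - η := by nlinarith
  have hlog_a : log (1 - η) ≤ -η := by linarith [log_le_sub_one_of_pos ha]
  have hlog_b : (1 - η - η ^ 2) ^ 2 - 1 ≤ 2 * ((1 - η - η ^ 2) * log (1 - η - η ^ 2)) := by
    have h := mul_le_mul_of_nonneg_left (sub_inv_le_two_mul_log hb (by nlinarith)) hb.le
    rwa [mul_sub, mul_inv_cancel₀ hb.ne', ← sq, mul_left_comm] at h
  calc (1 + 2 * η) * (1 - η) * log (1 - η)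
      ≤ (1 + 2 * η) * (1 - η) * -η := mul_le_mul_of_nonneg_left hlog_a (by positivity)
    _ = ((1 - η - η ^ 2) ^ 2 - 1) / 2 - (η * (1 - η)) ^ 2 / 2 := by ring
    _ < ((1 - η - η ^ 2) ^ 2 - 1) / 2 := by linarith [pow_pos (mul_pos hη ha) 2]
    _ ≤ (1 - η - η ^ 2) * log (1 - η - η ^ 2) := by linarith

noncomputable def logRatio (η : ℝ) : ℝ := log (1 - η) / log (1 - η - η ^ 2)

lemma hasDerivAt_logRatio {η : ℝ} (hη : 0 < η) (hb : 0 < 1 - η - η ^ 2) :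
    HasDerivAt logRatio
      (((1 + 2 * η) * (1 - η) * log (1 - η) - (1 - η - η ^ 2) * log (1 - η - η ^ 2)) /
        ((1 - η) * (1 - η - η ^ 2) * log (1 - η - η ^ 2) ^ 2)) η := by
  have ha : 0 < 1 - η := by nlinarith
  have hlog_b : log (1 - η - η ^ 2) ≠ 0 := (log_neg hb (by nlinarith)).ne
  have hA : HasDerivAt (fun η : ℝ => log (1 - η)) (-1 / (1 - η)) η :=
    ((hasDerivAt_id η).const_sub 1).log ha.ne'
  have hB : HasDerivAt (fun η : ℝ => log (1 - η - η ^ 2))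
      ((-1 - 2 * η) / (1 - η - η ^ 2)) η :=
    (((hasDerivAt_id η).const_sub 1).sub (hasDerivAt_pow 2 η)).log hb.ne' |>.congr_deriv
      (by simp)
  refine (hA.div hB hlog_b).congr_deriv ?_
  field_simp
  ring

lemma deriv_logRatio_neg {η : ℝ} (hη : 0 < η) (hb : 0 < 1 - η - η ^ 2) :
    deriv logRatio η < 0 := by
  rw [(hasDerivAt_logRatio hη hb).deriv]
  have ha : 0 < 1 - η := by nlinarith
  have hlog_b : log (1 - η - η ^ 2) ≠ 0 := (log_neg hb (by nlinarith)).ne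
  exact div_neg_of_neg_of_pos (sub_neg.2 (one_add_two_mul_mul_log_lt hη hb)) (by positivity)

lemma strictAntiOn_logRatio : StrictAntiOn logRatio (Ioo 0 (1 / 2)) := by
  have hb : ∀ η ∈ Ioo (0 : ℝ) (1 / 2), 0 < 1 - η - η ^ 2 := fun η hη => by
    nlinarith [hη.1, hη.2]
  refine strictAntiOn_of_deriv_neg (convex_Ioo 0 (1 / 2)) ?_ ?_
  · exact fun η hη => (hasDerivAt_logRatio hη.1 (hb η hη)).continuousAt.continuousWithinAt
  · rw [interior_Ioo]
    exact fun η hη => deriv_logRatio_neg hη.1 (hb η hη)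

theorem gap_strict_mono :
    StrictMonoOn (fun η : ℝ => (1 + η) - Real.log (1 - η) / Real.log (1 - η - η ^ 2))
      (Set.Ioo 0 (1/2)) := by
  intro x hx y hy hxy
  have h := strictAntiOn_logRatio hx hy hxy
  simp only [logRatio] at h
  linarith
end
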